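/- arXiv:2510.27329 — 2 statements merged into one kernel-verified Lean document; each statement's English description precedes it below -/
import Mathlib

section
/- Let γ be a real number with 0 < γ < 1, let K₁, K₂ be natural numbers with 1 ≤ K₁ < K₂, and let r₁, r₂ : ℕ → ℝ satisfy r_min ≤ r₁(k) ≤ r_max and r_min ≤ r₂(k) ≤ r_max for all k. Define Q₁ = γ^{K₁−1}·R + Σ_{k=0}^{K₁−2} γ^k r₁(k+1) and Q₂ = γ^{K₂−1} + Σ_{k=0}^{K₂−2} γ^k r₂(k+1). If R < γ^{K₂−K₁} − (γ^{1−K₁}/(1 − γ))·( r_max − r_min − γ^{K₁−1}·( r_max − γ^{K₂−K₁}·r_min ) ), where γ^{1−K₁} denotes γ raised to the integer power 1 − K₁, then Q₁ < Q₂. -/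
open Finset in
/-- if the terminal reward R is below the stated bound then Q₁ < Q₂. -/
theorem reward_bound_implies_optimality (γ : ℝ) (hγ0 : 0 < γ) (hγ1 : γ < 1)
    (K₁ K₂ : ℕ) (hK₁ : 1 ≤ K₁) (hK : K₁ < K₂)
    (rmin rmax : ℝ) (R : ℝ) (r₁ r₂ : ℕ → ℝ)
    (hr₁ : ∀ k, rmin ≤ r₁ k ∧ r₁ k ≤ rmax)
    (hr₂ : ∀ k, rmin ≤ r₂ k ∧ r₂ k ≤ rmax)
    (hR : R < γ ^ (K₂ - K₁) -
      (γ ^ ((1 : ℤ) - (K₁ : ℤ)) / (1 - γ)) *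
        (rmax - rmin - γ ^ (K₁ - 1) * (rmax - γ ^ (K₂ - K₁) * rmin))) :
    γ ^ (K₁ - 1) * R + ∑ k ∈ range (K₁ - 1), γ ^ k * r₁ (k + 1) <
      γ ^ (K₂ - 1) + ∑ k ∈ range (K₂ - 1), γ ^ k * r₂ (k + 1) := by
  have hγne : γ ≠ 1 := ne_of_lt hγ1
  have hpos : (0:ℝ) < 1 - γ := by linarith
  have hne : (1:ℝ) - γ ≠ 0 := ne_of_gt hpos
  have hne' : γ - 1 ≠ 0 := by intro h; apply hne; linarith
  set a := γ ^ (K₁ - 1) with ha_def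
  set b := γ ^ (K₂ - 1) with hb_def
  set c := γ ^ (K₂ - K₁) with hc_def
  have ha : (0:ℝ) < a := pow_pos hγ0 _
  have hb : (0:ℝ) < b := pow_pos hγ0 _
  have hac : a * c = b := by
    rw [ha_def, hc_def, hb_def, ← pow_add]
    congr 1
    omega
  have hzpow : γ ^ ((1 : ℤ) - (K₁ : ℤ)) = a⁻¹ := by
    have h1 : ((1 : ℤ) - (K₁ : ℤ)) = -((K₁ - 1 : ℕ) : ℤ) := by omega
    rw [h1, zpow_neg, zpow_natCast, ha_def]
  rw [hzpow] at hR
  -- bound the sums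
  have hsum1 : ∑ k ∈ range (K₁ - 1), γ ^ k * r₁ (k + 1) ≤
      ∑ k ∈ range (K₁ - 1), γ ^ k * rmax := by
    apply Finset.sum_le_sum
    intro i _
    exact mul_le_mul_of_nonneg_left (hr₁ (i + 1)).2 (le_of_lt (pow_pos hγ0 i))
  have hsum2 : ∑ k ∈ range (K₂ - 1), γ ^ k * rmin ≤
      ∑ k ∈ range (K₂ - 1), γ ^ k * r₂ (k + 1) := by
    apply Finset.sum_le_sum
    intro i _
    exact mul_le_mul_of_nonneg_left (hr₂ (i + 1)).1 (le_of_lt (pow_pos hγ0 i))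
  have hg1 : ∑ k ∈ range (K₁ - 1), γ ^ k * rmax = rmax * ((1 - a) / (1 - γ)) := by
    rw [← Finset.sum_mul, geom_sum_eq hγne, ha_def]
    field_simp
    ring
  have hg2 : ∑ k ∈ range (K₂ - 1), γ ^ k * rmin = rmin * ((1 - b) / (1 - γ)) := by
    rw [← Finset.sum_mul, geom_sum_eq hγne, hb_def]
    field_simp
    ring
  -- multiply hR by a > 0
  have hmul := mul_lt_mul_of_pos_left hR ha
  have haR : a * R < b - (rmax - rmin - a * rmax + b * rmin) / (1 - γ) := by
    have hainv : a * a⁻¹ = 1 := mul_inv_cancel₀ (ne_of_gt ha)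
    calc a * R < a * (c - a⁻¹ / (1 - γ) * (rmax - rmin - a * (rmax - c * rmin))) := hmul
      _ = a * c - (a * a⁻¹) * ((rmax - rmin - a * rmax + (a * c) * rmin) / (1 - γ)) := by
          field_simp
          ring
      _ = b - (rmax - rmin - a * rmax + b * rmin) / (1 - γ) := by rw [hac, hainv]; ring
  -- key algebraic identity
  have hkey : rmax * ((1 - a) / (1 - γ)) - (rmax - rmin - a * rmax + b * rmin) / (1 - γ)
      = rmin * ((1 - b) / (1 - γ)) := by
    field_simp
    ring
  linarith [hsum1, hsum2, haR, hg1, hg2, hkey]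
end

section
/- Let γ be a real number with 0 < γ < 1, let K₁, K₂ be natural numbers with 1 ≤ K₁ < K₂, and let r₁, r₂ : ℕ → ℝ satisfy r_min ≤ r₁(k) ≤ r_max and r_min ≤ r₂(k) ≤ r_max for all k, with γ^{K₂−K₁}·r_min ≤ r_max. Define Q₁ = γ^{K₁−1}·R + Σ_{k=0}^{K₁−2} γ^k r₁(k+1) and Q₂ = γ^{K₂−1} + Σ_{k=0}^{K₂−2} γ^k r₂(k+1). If R < γ^{K₂−K₁} − (γ^{1−K₁}/(1 − γ))·(r_max − r_min), where γ^{1−K₁} denotes γ raised to the integer power 1 − K₁, then Q₁ < Q₂. -/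
/-!
Bound the intermediate rewards by `rmax` in `Q₁` and by `rmin` in `Q₂`, so that both returns are
compared through geometric sums. Multiplying the condition on `R` by `γ^(K₁-1)` cancels the
integer power `γ^(1-K₁)`, and what is then left to check is `γ^(K₂-1) rmin ≤ γ^(K₁-1) rmax`,
the hypothesis `γ^(K₂-K₁) rmin ≤ rmax` scaled by `γ^(K₁-1)`.
-/

open Finset

noncomputable def discountedReturn (γ : ℝ) (K : ℕ) (T : ℝ) (r : ℕ → ℝ) : ℝ :=
  γ ^ (K - 1) * T + ∑ k ∈ range (K - 1), γ ^ k * r (k + 1)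

lemma pow_sub_one_mul_zpow_one_sub {G₀ : Type*} [GroupWithZero G₀] {a : G₀} (ha : a ≠ 0)
    {K : ℕ} (hK : 1 ≤ K) : a ^ (K - 1) * a ^ ((1 : ℤ) - K) = 1 := by
  rw [← zpow_natCast, ← zpow_add₀ ha, Nat.cast_sub hK, Nat.cast_one, sub_add_sub_cancel',
    sub_self, zpow_zero]

section GeometricBounds

variable {γ : ℝ}

lemma sum_pow_mul_le_of_le (hγ0 : 0 ≤ γ) (hγ1 : γ ≠ 1) {f : ℕ → ℝ} {M : ℝ}
    (hf : ∀ k, f k ≤ M) (n : ℕ) :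
    ∑ k ∈ range n, γ ^ k * f k ≤ (1 - γ ^ n) / (1 - γ) * M := by
  calc ∑ k ∈ range n, γ ^ k * f k ≤ ∑ k ∈ range n, γ ^ k * M :=
        sum_le_sum fun k _ => mul_le_mul_of_nonneg_left (hf k) (pow_nonneg hγ0 k)
    _ = (1 - γ ^ n) / (1 - γ) * M := by
        rw [← sum_mul, geom_sum_eq hγ1, ← neg_div_neg_eq, neg_sub, neg_sub]

lemma le_sum_pow_mul_of_le (hγ0 : 0 ≤ γ) (hγ1 : γ ≠ 1) {f : ℕ → ℝ} {m : ℝ}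
    (hf : ∀ k, m ≤ f k) (n : ℕ) :
    (1 - γ ^ n) / (1 - γ) * m ≤ ∑ k ∈ range n, γ ^ k * f k := by
  have h := sum_pow_mul_le_of_le hγ0 hγ1 (f := fun k => -f k) (fun k => neg_le_neg (hf k)) n
  simp only [mul_neg, sum_neg_distrib] at h
  linarith

variable {K : ℕ} {T : ℝ} {r : ℕ → ℝ}

lemma discountedReturn_le (hγ0 : 0 ≤ γ) (hγ1 : γ ≠ 1) {M : ℝ} (hr : ∀ k, r k ≤ M) :
    discountedReturn γ K T r ≤ γ ^ (K - 1) * T + (1 - γ ^ (K - 1)) / (1 - γ) * M :=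
  add_le_add_right (sum_pow_mul_le_of_le hγ0 hγ1 (fun k => hr (k + 1)) _) _

lemma le_discountedReturn (hγ0 : 0 ≤ γ) (hγ1 : γ ≠ 1) {m : ℝ} (hr : ∀ k, m ≤ r k) :
    γ ^ (K - 1) * T + (1 - γ ^ (K - 1)) / (1 - γ) * m ≤ discountedReturn γ K T r :=
  add_le_add_right (le_sum_pow_mul_of_le hγ0 hγ1 (fun k => hr (k + 1)) _) _

end GeometricBounds

open Finset in
/-- the tightened sufficient condition on R still gives Q₁ < Q₂. -/
theorem tightened_reward_bound_implies_optimality (γ : ℝ) (hγ0 : 0 < γ) (hγ1 : γ < 1)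
    (K₁ K₂ : ℕ) (hK₁ : 1 ≤ K₁) (hK : K₁ < K₂)
    (rmin rmax : ℝ) (R : ℝ) (r₁ r₂ : ℕ → ℝ)
    (hr₁ : ∀ k, rmin ≤ r₁ k ∧ r₁ k ≤ rmax)
    (hr₂ : ∀ k, rmin ≤ r₂ k ∧ r₂ k ≤ rmax)
    (hmm : γ ^ (K₂ - K₁) * rmin ≤ rmax)
    (hR : R < γ ^ (K₂ - K₁) - (γ ^ ((1 : ℤ) - (K₁ : ℤ)) / (1 - γ)) * (rmax - rmin)) :
    γ ^ (K₁ - 1) * R + ∑ k ∈ range (K₁ - 1), γ ^ k * r₁ (k + 1) <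
      γ ^ (K₂ - 1) + ∑ k ∈ range (K₂ - 1), γ ^ k * r₂ (k + 1) := by
  set a := γ ^ (K₁ - 1)
  set b := γ ^ (K₂ - 1)
  have hγ1' : 0 < 1 - γ := sub_pos.mpr hγ1
  have hab : a * γ ^ (K₂ - K₁) = b := by rw [← pow_add]; congr 1; omega
  have hRa : a * R < b - (rmax - rmin) / (1 - γ) := by
    have h := mul_lt_mul_of_pos_left hR (pow_pos hγ0 (K₁ - 1))
    rwa [mul_sub, hab, ← mul_assoc, mul_div_assoc', pow_sub_one_mul_zpow_one_sub hγ0.ne' hK₁,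
      one_div_mul_eq_div] at h
  have hscaled : b * rmin ≤ a * rmax := by
    rw [← hab, mul_assoc]; exact mul_le_mul_of_nonneg_left hmm (pow_nonneg hγ0.le _)
  rw [← mul_one b]
  calc discountedReturn γ K₁ R r₁ ≤ a * R + (1 - a) / (1 - γ) * rmax :=
        discountedReturn_le hγ0.le hγ1.ne fun k => (hr₁ k).2
    _ < b - (rmax - rmin) / (1 - γ) + (1 - a) / (1 - γ) * rmax := by gcongr
    _ ≤ b * 1 + (1 - b) / (1 - γ) * rmin := by
        have h : (1 - a) * rmax - (rmax - rmin) ≤ (1 - b) * rmin := by linarith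
        rw [div_mul_eq_mul_div, div_mul_eq_mul_div]
        linarith [div_le_div_of_nonneg_right h hγ1'.le,
          sub_div ((1 - a) * rmax) (rmax - rmin) (1 - γ)]
    _ ≤ discountedReturn γ K₂ 1 r₂ := le_discountedReturn hγ0.le hγ1.ne fun k => (hr₂ k).1
end
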